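/- Let X ⊆ {0,1}^m and Y ⊆ {0,1}^n be nonempty, and for binary strings u ∈ {0,1}^m, v ∈ {0,1}^n let uv ∈ {0,1}^{m+n} denote concatenation. Then the downward closure of {xy : x ∈ X, y ∈ Y} in {0,1}^{m+n} equals {uv : u in the downward closure of X, v in the downward closure of Y}; consequently the daisy cube Q_{m+n}({xy : x ∈ X, y ∈ Y}) is isomorphic to the Cartesian product of the daisy cubes Q_m(X) and Q_n(Y). -/

import Mathlib

/-!
Concatenation `(u, v) ↦ u ++ v` is an order isomorphism `{0,1}^m × {0,1}^n ≃o {0,1}^(m+n)`, and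
since Hamming distance is additive over the two blocks it is also a graph isomorphism
`Q_m □ Q_n ≃g Q_(m+n)`. Lower closures commute with order isomorphisms and with products, so the
lower closure of `X ×ˢ Y` is sent to the lower closure of the concatenations; and inducing on a
product of vertex sets commutes with the box product.
-/

/-- The hypercube Q_n: vertices are binary strings of length n,
two vertices are adjacent iff they differ in exactly one position. -/
def Qcube (n : ℕ) : SimpleGraph (Fin n → Bool) where
  Adj u v := hammingDist u v = 1
  symm := by
    constructor
    intro u v h
    rwa [hammingDist_comm]
  loopless := by
    constructor
    intro u h
    simp [hammingDist_self] at h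

namespace Fin

variable {α : Type*} {m n : ℕ}

theorem append_le_append_iff [LE α] {u x : Fin m → α} {v y : Fin n → α} :
    append u v ≤ append x y ↔ u ≤ x ∧ v ≤ y := by
  simp only [Pi.le_def, forall_fin_add, append_left, append_right]

theorem hammingDist_append [DecidableEq α] (u u' : Fin m → α) (v v' : Fin n → α) :
    hammingDist (append u v) (append u' v') = hammingDist u u' + hammingDist v v' := by
  simp only [hammingDist, Finset.card_filter, sum_univ_add, append_left, append_right]

variable (α m n) in
def appendOrderIso [Preorder α] : (Fin m → α) × (Fin n → α) ≃o (Fin (m + n) → α) where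
  toEquiv := appendEquiv m n
  map_rel_iff' := append_le_append_iff

@[simp]
theorem coe_appendOrderIso [Preorder α] :
    ⇑(appendOrderIso α m n) = fun p => append p.1 p.2 := rfl

theorem image2_append_eq_image_appendOrderIso [Preorder α] (s : Set (Fin m → α))
    (t : Set (Fin n → α)) : Set.image2 append s t = appendOrderIso α m n '' s ×ˢ t := by
  simp [Set.image_prod]

theorem lowerClosure_image2_append [Preorder α] (s : Set (Fin m → α)) (t : Set (Fin n → α)) :
    (lowerClosure (Set.image2 append s t) : Set (Fin (m + n) → α)) =
      Set.image2 append (lowerClosure s) (lowerClosure t) := by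
  rw [image2_append_eq_image_appendOrderIso, image2_append_eq_image_appendOrderIso,
    lowerClosure_image, LowerSet.coe_map, lowerClosure_prod, LowerSet.coe_prod]

end Fin

namespace SimpleGraph

variable {V W : Type*}

def boxProdInduceIso (G : SimpleGraph V) (H : SimpleGraph W) (s : Set V) (t : Set W) :
    (G □ H).induce (s ×ˢ t) ≃g G.induce s □ H.induce t where
  toEquiv := Equiv.Set.prod s t
  map_rel_iff' := or_congr (and_congr .rfl Subtype.ext_iff) (and_congr .rfl Subtype.ext_iff)

end SimpleGraph

def qcubeBoxProdIso (m n : ℕ) : (Qcube m).boxProd (Qcube n) ≃g Qcube (m + n) where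
  toEquiv := Fin.appendEquiv m n
  map_rel_iff' {p q} := by
    change hammingDist (Fin.append p.1 p.2) (Fin.append q.1 q.2) = 1 ↔ _
    rw [Fin.hammingDist_append, Nat.add_eq_one_iff, SimpleGraph.boxProd_adj]
    simp only [Qcube, hammingDist_eq_zero]
    tauto

theorem stmt12_general (m n : ℕ) (X : Set (Fin m → Bool)) (Y : Set (Fin n → Bool))
    (DX : Set (Fin m → Bool)) (hDX : DX = {u | ∃ x ∈ X, u ≤ x})
    (DY : Set (Fin n → Bool)) (hDY : DY = {u | ∃ y ∈ Y, u ≤ y})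
    (Z : Set (Fin (m + n) → Bool))
    (hZ : Z = {w | ∃ x ∈ X, ∃ y ∈ Y, w = Fin.append x y})
    (DZ : Set (Fin (m + n) → Bool)) (hDZ : DZ = {w | ∃ z ∈ Z, w ≤ z}) :
    DZ = {w | ∃ u ∈ DX, ∃ v ∈ DY, w = Fin.append u v} ∧
    Nonempty (((Qcube (m + n)).induce DZ) ≃g
      (((Qcube m).induce DX).boxProd ((Qcube n).induce DY))) := by
  have hZ_image2 : Z = Set.image2 Fin.append X Y := by simp only [hZ, Set.image2, eq_comm]
  have hDZ_image2 : DZ = Set.image2 Fin.append DX DY := by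
    rw [hDZ, hDX, hDY, hZ_image2]
    exact Fin.lowerClosure_image2_append X Y
  refine ⟨by simp only [hDZ_image2, Set.image2, eq_comm], ⟨?_⟩⟩
  have hbij : Set.BijOn (qcubeBoxProdIso m n) (DX ×ˢ DY) DZ := by
    rw [hDZ_image2, Fin.image2_append_eq_image_appendOrderIso]
    exact (qcubeBoxProdIso m n).injective.injOn.bijOn_image
  exact ((qcubeBoxProdIso m n).induce hbij).symm.trans (SimpleGraph.boxProdInduceIso _ _ _ _)

/-- The downward closure of the set of concatenations {xy : x ∈ X, y ∈ Y}
equals the set of concatenations of elements of the downward closures of X and Y;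
consequently the daisy cube Q_{m+n}({xy}) is isomorphic to the Cartesian (box)
product of the daisy cubes Q_m(X) and Q_n(Y). -/
theorem stmt12 (m n : ℕ) (X : Set (Fin m → Bool)) (Y : Set (Fin n → Bool))
    (hX : X.Nonempty) (hY : Y.Nonempty)
    (DX : Set (Fin m → Bool)) (hDX : DX = {u | ∃ x ∈ X, u ≤ x})
    (DY : Set (Fin n → Bool)) (hDY : DY = {u | ∃ y ∈ Y, u ≤ y})
    (Z : Set (Fin (m + n) → Bool))
    (hZ : Z = {w | ∃ x ∈ X, ∃ y ∈ Y, w = Fin.append x y})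
    (DZ : Set (Fin (m + n) → Bool)) (hDZ : DZ = {w | ∃ z ∈ Z, w ≤ z}) :
    DZ = {w | ∃ u ∈ DX, ∃ v ∈ DY, w = Fin.append u v} ∧
    Nonempty (((Qcube (m + n)).induce DZ) ≃g
      (((Qcube m).induce DX).boxProd ((Qcube n).induce DY))) :=
  stmt12_general m n X Y DX hDX DY hDY Z hZ DZ hDZ
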